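/- arXiv:1610.01195 — 3 statements merged into one kernel-verified Lean document; each statement's English description precedes it below -/
import Mathlib

section
/- Let E and A be elliptic curves over a number field K. Then K(E[2]) = K(A[2]) if and only if there exists a G_K-module isomorphism E[2] ≅ A[2]. -/
/-!
Over `𝔽₂` in dimension two a linear automorphism is determined by how it permutes the three
nonzero vectors, and by counting (`|GL₂(𝔽₂)| = 6 = 3!`) every permutation arises, so
`GL(W) ≅ S₃`. If `ρV` and `ρW` have the same kernel, then after transporting `ρV` to `W` along
any linear isomorphism they become two embeddings of the same quotient of `G` into `S₃`. Any two
such embeddings are conjugate: a proper subgroup of `S₃` is cyclic and elements of `S₃` of the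
same order are conjugate, while every automorphism of `S₃` is inner. The conjugating element,
composed with the transport, is the equivariant isomorphism.
-/

open Equiv Function Module

namespace Equiv.Perm

theorem exists_conj_of_sq_eq_one_iff_fin_three : ∀ s t : Perm (Fin 3),
    (s = 1 ↔ t = 1) → (s ^ 2 = 1 ↔ t ^ 2 = 1) → ∃ σ, t = σ * s * σ⁻¹ := by
  decide

set_option synthInstance.maxSize 1000 in
theorem exists_conj_swap_swap_fin_three : ∀ s t : Perm (Fin 3),
    s ≠ 1 → t ≠ 1 → s ^ 2 = 1 → t ^ 2 = 1 → s ≠ t →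
      ∃ σ, s = σ * swap (0 : Fin 3) 1 * σ⁻¹ ∧ t = σ * swap (1 : Fin 3) 2 * σ⁻¹ := by
  decide

theorem closure_swap_swap_fin_three :
    Subgroup.closure {swap (0 : Fin 3) 1, swap 1 2} = ⊤ := by
  refine Subgroup.closure_eq_top_of_mclosure_eq_top ?_
  convert mclosure_swap_castSucc_succ 2 using 2
  ext
  simp [Fin.exists_fin_two, eq_comm]

theorem exists_conj_of_injective_endo_fin_three (f : Perm (Fin 3) →* Perm (Fin 3))
    (hf : Injective f) : ∃ σ, ∀ x, f x = σ * x * σ⁻¹ := by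
  have involution : ∀ x : Perm (Fin 3), x ≠ 1 → x ^ 2 = 1 → f x ≠ 1 ∧ f x ^ 2 = 1 :=
    fun x h1 h2 => ⟨(map_ne_one_iff f hf).2 h1, by rw [← map_pow, h2, map_one]⟩
  obtain ⟨h01, h01'⟩ := involution (swap 0 1) (by decide) (by decide)
  obtain ⟨h12, h12'⟩ := involution (swap 1 2) (by decide) (by decide)
  obtain ⟨σ, hσ01, hσ12⟩ :=
    exists_conj_swap_swap_fin_three _ _ h01 h12 h01' h12' (hf.ne (by decide))
  have hf_eq : f = (MulAut.conj σ).toMonoidHom :=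
    MonoidHom.eq_of_eqOn_dense closure_swap_swap_fin_three (by rintro _ (rfl | rfl) <;> simpa)
  exact ⟨σ, fun x => by simp [hf_eq]⟩

theorem exists_conj_of_injective_of_isCyclic_fin_three {Q : Type*} [Group Q] [IsCyclic Q]
    {u v : Q →* Perm (Fin 3)} (hu : Injective u) (hv : Injective v) :
    ∃ σ, ∀ q, v q = σ * u q * σ⁻¹ := by
  obtain ⟨a, ha⟩ := IsCyclic.exists_generator (α := Q)
  obtain ⟨σ, hσ⟩ := exists_conj_of_sq_eq_one_iff_fin_three (u a) (v a)
    (by rw [map_eq_one_iff u hu, map_eq_one_iff v hv])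
    (by rw [← map_pow, ← map_pow, map_eq_one_iff u hu, map_eq_one_iff v hv])
  have hv_eq : v = (MulAut.conj σ).toMonoidHom.comp u := by
    refine MonoidHom.eq_of_eqOn_dense (s := {a}) ?_ (by simpa)
    rw [← Subgroup.zpowers_eq_closure, eq_top_iff]
    exact fun x _ => ha x
  exact ⟨σ, fun q => by simp [hv_eq]⟩

theorem _root_.isCyclic_of_card_dvd_six {Q : Type*} [Group Q] (hdvd : Nat.card Q ∣ 6)
    (hne : Nat.card Q ≠ 6) : IsCyclic Q := by
  have hle : Nat.card Q ≤ 6 := Nat.le_of_dvd (by norm_num) hdvd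
  have : Finite Q := Nat.finite_of_card_ne_zero (by rintro h; simp [h] at hdvd)
  interval_cases h : Nat.card Q
  · simp at hdvd
  · have := (Nat.card_eq_one_iff_unique.1 h).1; infer_instance
  · have : Fact (Nat.Prime 2) := ⟨Nat.prime_two⟩; exact isCyclic_of_prime_card h
  · have : Fact (Nat.Prime 3) := ⟨Nat.prime_three⟩; exact isCyclic_of_prime_card h
  all_goals omega

theorem exists_conj_of_injective_fin_three {Q : Type*} [Group Q]
    {u v : Q →* Perm (Fin 3)} (hu : Injective u) (hv : Injective v) :
    ∃ σ, ∀ q, v q = σ * u q * σ⁻¹ := by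
  have hcard : Nat.card (Perm (Fin 3)) = 6 := by rw [Nat.card_perm, Nat.card_fin]; rfl
  have hdvd : Nat.card Q ∣ 6 := hcard ▸ Subgroup.card_dvd_of_injective u hu
  by_cases h6 : Nat.card Q = 6
  · let e := MulEquiv.ofBijective u (hu.bijective_of_nat_card_le (by rw [hcard, h6]))
    obtain ⟨σ, hσ⟩ := exists_conj_of_injective_endo_fin_three (v.comp e.symm.toMonoidHom)
      (hv.comp e.symm.injective)
    refine ⟨σ, fun q => ?_⟩
    have := hσ (e q)
    rwa [MonoidHom.comp_apply, MulEquiv.coe_toMonoidHom, MulEquiv.symm_apply_apply] at this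
  · have := isCyclic_of_card_dvd_six hdvd h6
    exact exists_conj_of_injective_of_isCyclic_fin_three hu hv

end Equiv.Perm

theorem MonoidHom.exists_conj_of_ker_eq {G H : Type*} [Group G] [Group H]
    (φ : H ≃* Perm (Fin 3)) {u v : G →* H} (h : u.ker = v.ker) :
    ∃ τ, ∀ g, v g = τ * u g * τ⁻¹ := by
  let v' := (QuotientGroup.kerLift v).comp (QuotientGroup.quotientMulEquivOfEq h).toMonoidHom
  obtain ⟨σ, hσ⟩ := Perm.exists_conj_of_injective_fin_three
    (u := φ.toMonoidHom.comp (QuotientGroup.kerLift u)) (v := φ.toMonoidHom.comp v')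
    (φ.injective.comp (QuotientGroup.kerLift_injective u))
    (φ.injective.comp ((QuotientGroup.kerLift_injective v).comp (MulEquiv.injective _)))
  refine ⟨φ.symm σ, fun g => φ.injective ?_⟩
  simpa [v'] using hσ g

theorem natCard_linearEquiv_self {K V : Type*} [Field K] [Fintype K] [AddCommGroup V]
    [Module K V] [Module.Finite K V] :
    Nat.card (V ≃ₗ[K] V) =
      ∏ i : Fin (finrank K V), (Fintype.card K ^ finrank K V - Fintype.card K ^ (i : ℕ)) :=
  (Nat.card_congr ((Matrix.GeneralLinearGroup.toLin' (Module.finBasis K V)).trans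
    (LinearMap.GeneralLinearGroup.generalLinearEquiv K V)).toEquiv).symm.trans
    (Matrix.card_GL_field _)

namespace LinearEquiv

section Semiring

variable {R V W : Type*} [Semiring R] [AddCommMonoid V] [AddCommMonoid W] [Module R V]
  [Module R W]

def autCongr (e : V ≃ₗ[R] W) : (V ≃ₗ[R] V) ≃* (W ≃ₗ[R] W) where
  toFun f := e.symm.trans (f.trans e)
  invFun f := e.trans (f.trans e.symm)
  left_inv f := by ext; simp
  right_inv f := by ext; simp
  map_mul' f g := by ext; simp

@[simp]
theorem autCongr_apply (e : V ≃ₗ[R] W) (f : V ≃ₗ[R] V) (w : W) :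
    autCongr e f w = e (f (e.symm w)) :=
  rfl

theorem autCongr_comp_eq_iff {G : Type*} [Group G] (e : V ≃ₗ[R] W) (ρV : G →* (V ≃ₗ[R] V))
    (ρW : G →* (W ≃ₗ[R] W)) :
    (autCongr e).toMonoidHom.comp ρV = ρW ↔ ∀ g v, e (ρV g v) = ρW g (e v) := by
  simp only [MonoidHom.ext_iff, LinearEquiv.ext_iff, MonoidHom.comp_apply,
    MulEquiv.coe_toMonoidHom, autCongr_apply]
  exact ⟨fun h g v => by simpa using h g (e v), fun h g w => by simpa using h g (e.symm w)⟩

def toPermNonzero : (V ≃ₗ[R] V) →* Perm {v : V // v ≠ 0} where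
  toFun f := f.toEquiv.subtypeEquiv fun _ => f.map_ne_zero_iff.symm
  map_one' := rfl
  map_mul' _ _ := rfl

theorem toPermNonzero_injective : Injective (toPermNonzero (R := R) (V := V)) := by
  intro f g h
  ext v
  by_cases hv : v = 0
  · simp [hv]
  · exact congrArg Subtype.val (Equiv.congr_fun h ⟨v, hv⟩)

end Semiring

theorem nonempty_mulEquiv_perm_fin_three_of_finrank_eq_two {V : Type*} [AddCommGroup V]
    [Module (ZMod 2) V] (hV : finrank (ZMod 2) V = 2) :
    Nonempty ((V ≃ₗ[ZMod 2] V) ≃* Perm (Fin 3)) := by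
  classical
  have : Module.Finite (ZMod 2) V := Module.finite_of_finrank_eq_succ hV
  have : Fintype V := Module.fintypeOfFintype (Module.finBasis (ZMod 2) V)
  have hV4 : Nat.card V = 4 := by
    rw [Nat.card_eq_fintype_card, Module.card_eq_pow_finrank (K := ZMod 2), hV, ZMod.card]; rfl
  have hnz : Nat.card {v : V // v ≠ 0} = 3 := by
    rw [Nat.card_eq_fintype_card, Fintype.card_subtype_compl, Fintype.card_subtype_eq,
      ← Nat.card_eq_fintype_card, hV4]
  have hbij : Bijective (toPermNonzero (R := ZMod 2) (V := V)) :=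
    toPermNonzero_injective.bijective_of_nat_card_le (by
      rw [natCard_linearEquiv_self, Nat.card_perm, hnz, hV, ZMod.card]; decide)
  exact ⟨(MulEquiv.ofBijective _ hbij).trans (permCongrHom (Finite.equivFinOfCardEq hnz))⟩

end LinearEquiv

section Representation

variable {G R V W : Type*} [Group G] [Semiring R] [AddCommMonoid V] [AddCommMonoid W]
  [Module R V] [Module R W] {ρV : G →* (V ≃ₗ[R] V)} {ρW : G →* (W ≃ₗ[R] W)}

theorem ker_eq_of_intertwines (e : V ≃ₗ[R] W) (he : ∀ g v, e (ρV g v) = ρW g (e v)) :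
    ρV.ker = ρW.ker := by
  rw [← (LinearEquiv.autCongr_comp_eq_iff e ρV ρW).2 he,
    MonoidHom.ker_comp_of_injective _ _ (LinearEquiv.autCongr e).injective]

theorem exists_intertwines_of_ker_eq (φ : (W ≃ₗ[R] W) ≃* Perm (Fin 3)) (e₀ : V ≃ₗ[R] W)
    (h : ρV.ker = ρW.ker) : ∃ e : V ≃ₗ[R] W, ∀ g v, e (ρV g v) = ρW g (e v) := by
  obtain ⟨τ, hτ⟩ := MonoidHom.exists_conj_of_ker_eq φ
    (u := (LinearEquiv.autCongr e₀).toMonoidHom.comp ρV) (v := ρW)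
    (by rw [MonoidHom.ker_comp_of_injective _ _ (LinearEquiv.autCongr e₀).injective, h])
  refine ⟨e₀.trans τ, fun g v => ?_⟩
  simp [hτ g]

end Representation

/-- `G` plays the role of `G_K` and `V`, `W` that of `E[2]`, `A[2]`. Since `K(E[2])` is the
fixed field of `ker ρV`, equality of the division fields is equality of the kernels. -/
theorem stmt3 {G V W : Type*} [Group G] [AddCommGroup V] [AddCommGroup W]
    [Module (ZMod 2) V] [Module (ZMod 2) W]
    (hV : Module.finrank (ZMod 2) V = 2) (hW : Module.finrank (ZMod 2) W = 2)
    (ρV : G →* (V ≃ₗ[ZMod 2] V)) (ρW : G →* (W ≃ₗ[ZMod 2] W)) :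
    ρV.ker = ρW.ker ↔
      ∃ e : V ≃ₗ[ZMod 2] W, ∀ (g : G) (v : V), e (ρV g v) = ρW g (e v) := by
  refine ⟨fun h => ?_, fun ⟨e, he⟩ => ker_eq_of_intertwines e he⟩
  have : Module.Finite (ZMod 2) V := Module.finite_of_finrank_eq_succ hV
  have : Module.Finite (ZMod 2) W := Module.finite_of_finrank_eq_succ hW
  obtain ⟨φ⟩ := LinearEquiv.nonempty_mulEquiv_perm_fin_three_of_finrank_eq_two hW
  exact exists_intertwines_of_ker_eq φ (LinearEquiv.ofFinrankEq V W (hV.trans hW.symm)) h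
end

section
/- Let q ∤ 2 be a prime of a number field K where the elliptic curve C has good reduction, and let η be a ramified quadratic character of G_{K_q}. Then the 2-primary torsion of the quadratic twist satisfies C^η(K_q)[2^∞] = C^η(K_q)[2]. -/
/- `A` models `C(K̄_q)` with its `G_{K_q}`-action and `I` the inertia subgroup; a point of
`C^η(K_q)` is an `a : A` with `σ • a = η σ • a`, via the identification `C ≅ C^η` over `K̄_q`.
An inertia element with `η h = -1` fixes the 2-primary point `a` by good reduction but
also sends it to `-a`, so `a = -a`. -/
/-- Let `q ∤ 2` be a prime of `K` where the elliptic curve `C` has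
good reduction and `η` a ramified quadratic character of `G_{K_q}`.  Then
`C^η(K_q)[2^∞] = C^η(K_q)[2]`.  Abstract formalization: `G = G_{K_q}` acts on
`A = C(K̄_q)`; `I ≤ G` is the inertia subgroup (so `A^I`-rationality over `K_q^ur`);
good reduction at odd residue characteristic gives `C(K_q^ur)[2^∞] = C[2^∞]`, i.e.
all 2-power torsion of `A` is fixed by `I` (hypothesis `hgood`); `η` ramified means
`η` is nontrivial on `I`.  A point of `C^η(K_q)` is `a ∈ A` with
`σ • a = η(σ) • a` for all `σ` (via the canonical identification `C ≅ C^η` over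
`K̄_q`).  The conclusion `2 • a = 0` says any 2-power torsion point of `C^η(K_q)` is
2-torsion; the reverse inclusion is trivial. -/
theorem stmt9 {G A : Type*} [Group G] [AddCommGroup A] [DistribMulAction G A]
    (I : Subgroup G)
    (η : G →* ℤˣ) (hram : ∃ h ∈ I, η h = -1)
    (hgood : ∀ a : A, (∃ k : ℕ, 2 ^ k • a = 0) → ∀ h ∈ I, h • a = a)
    (a : A) (ha : ∃ k : ℕ, 2 ^ k • a = 0)
    (htwist : ∀ σ : G, σ • a = (η σ : ℤ) • a) :
    2 • a = 0 := by
  obtain ⟨h, hI, hη⟩ := hram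
  have hfix : h • a = a := hgood a ha h hI
  have hneg : h • a = -a := by
    rw [htwist h, hη, Units.val_neg, Units.val_one, neg_one_smul]
  rw [two_smul]
  exact eq_neg_iff_add_eq_zero.mp (hfix.symm.trans hneg)
end

section
/- Let G and G' be two groups each isomorphic to S₃ or Z/3Z, arising as Gal(M/K) and Gal(M'/K) for distinct fields M ≠ M' with both degrees divisible by 3. Then 3 does not divide [M ∩ M' : K], and consequently there exists σ ∈ Gal(MM'/K) whose restriction to M has order 3 and whose restriction to M' has order 3. -/
/-!
A surjection from `S₃` onto a group of odd order is trivial, since `S₃` is generated by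
involutions. Hence `S₃` and `C₃` have no proper quotient of order divisible by `3`, and applying
this to the restriction `Gal(M/K) → Gal(M ⊓ M'/K)` shows that `3 ∣ [M ⊓ M' : K]` would force
`M = M ⊓ M' = M'`.

For `σ`, both Galois groups have exponent dividing `6`, so raising to the fourth power fixes
the elements of order `3` and lands in the `3`-torsion. Taking fourth powers of lifts of elements of
order `3` in `Gal(M/K)` and in `Gal(M'/K)`, one of them or their product restricts to elements of
order `3` on both sides.
-/

open Module

def IsS3OrC3 (A : Type*) [Group A] : Prop :=
  Nonempty (A ≃* Equiv.Perm (Fin 3)) ∨ Nonempty (A ≃* Multiplicative (ZMod 3))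

theorem Equiv.Perm.monoidHom_eq_one_of_odd_natCard {α B : Type*} [Finite α] [Group B]
    (φ : Equiv.Perm α →* B) (hB : Odd (Nat.card B)) : φ = 1 := by
  classical
  refine MonoidHom.eq_of_eqOn_dense Equiv.Perm.closure_isSwap fun t (ht : t.IsSwap) => ?_
  have h2 : orderOf (φ t) ∣ 2 := orderOf_dvd_of_pow_eq_one <| by
    obtain ⟨x, y, -, rfl⟩ := ht
    rw [← map_pow, sq, Equiv.swap_mul_self, map_one]
  exact orderOf_eq_one_iff.mp <| Nat.eq_one_of_dvd_coprimes
    (Nat.coprime_two_left.mpr hB) h2 (orderOf_dvd_natCard _)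

namespace IsS3OrC3

variable {A : Type*} [Group A]

theorem natCard_eq (hA : IsS3OrC3 A) : Nat.card A = 3 ∨ Nat.card A = 6 := by
  rcases hA with ⟨⟨e⟩⟩ | ⟨⟨e⟩⟩
  · right
    rw [Nat.card_congr e.toEquiv, Nat.card_perm, Nat.card_fin]
    rfl
  · left
    simp [Nat.card_congr e.toEquiv]

theorem pow_six_eq_one (hA : IsS3OrC3 A) (a : A) : a ^ 6 = 1 :=
  orderOf_dvd_iff_pow_eq_one.mp <| (orderOf_dvd_natCard a).trans <| by
    rcases hA.natCard_eq with h | h <;> norm_num [h]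

theorem exists_orderOf_eq_three (hA : IsS3OrC3 A) : ∃ a : A, orderOf a = 3 := by
  have : Finite A := Nat.finite_of_card_ne_zero (by rcases hA.natCard_eq with h | h <;> omega)
  exact exists_prime_orderOf_dvd_card' 3 (by rcases hA.natCard_eq with h | h <;> omega)

theorem natCard_eq_of_surjective {B : Type*} [Group B] (hA : IsS3OrC3 A) {φ : A →* B}
    (hφ : Function.Surjective φ) (h3 : 3 ∣ Nat.card B) : Nat.card B = Nat.card A := by
  have hdvd := Subgroup.card_dvd_of_surjective φ hφ
  rcases hA with ⟨⟨e⟩⟩ | ⟨⟨e⟩⟩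
  · have hA6 : Nat.card A = 6 := by
      rw [Nat.card_congr e.toEquiv, Nat.card_perm, Nat.card_fin]
      rfl
    rw [hA6] at hdvd ⊢
    obtain ⟨k, hk⟩ := h3
    rcases (Nat.dvd_prime Nat.prime_two).mp
      (Nat.dvd_of_mul_dvd_mul_left three_pos (hk ▸ hdvd)) with rfl | rfl
    · have hφe : φ.comp e.symm.toMonoidHom = 1 :=
        Equiv.Perm.monoidHom_eq_one_of_odd_natCard _ (by rw [hk]; decide)
      have : Subsingleton B := subsingleton_of_forall_eq 1 fun b => by
        obtain ⟨a, rfl⟩ := hφ b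
        simpa using DFunLike.congr_fun hφe (e a)
      have := Nat.card_unique (α := B)
      omega
    · exact hk
  · have hA3 : Nat.card A = 3 := by simp [Nat.card_congr e.toEquiv]
    exact Nat.dvd_antisymm (hA3 ▸ hdvd) (hA3 ▸ h3)

end IsS3OrC3

section OrderThree

variable {G A B : Type*} [Group G] [Group A] [Group B] {f : G →* A} {g : G →* B}

theorem exists_orderOf_map_eq_three_and_map_pow_three_eq_one (hB : ∀ b : B, b ^ 6 = 1)
    {x : G} (hx : orderOf (f x) = 3) : ∃ y, orderOf (f y) = 3 ∧ g y ^ 3 = 1 := by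
  have hfx : f x ^ 3 = 1 := hx ▸ pow_orderOf_eq_one (f x)
  -- `4 ≡ 1 [MOD 3]` and `6 ∣ 4 * 3`.
  refine ⟨x ^ 4, ?_, ?_⟩
  · rwa [map_pow, pow_succ, hfx, one_mul]
  · rw [map_pow, ← pow_mul, show 4 * 3 = 6 * 2 by rfl, pow_mul, hB, one_pow]

theorem exists_orderOf_map_eq_three (hA : ∀ a : A, a ^ 6 = 1) (hB : ∀ b : B, b ^ 6 = 1)
    {x y : G} (hx : orderOf (f x) = 3) (hy : orderOf (g y) = 3) :
    ∃ z, orderOf (f z) = 3 ∧ orderOf (g z) = 3 := by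
  obtain ⟨x, hfx, hgx⟩ := exists_orderOf_map_eq_three_and_map_pow_three_eq_one (g := g) hB hx
  obtain ⟨y, hgy, hfy⟩ := exists_orderOf_map_eq_three_and_map_pow_three_eq_one (g := f) hA hy
  by_cases hgx1 : g x = 1
  · by_cases hfy1 : f y = 1
    · refine ⟨x * y, ?_, ?_⟩
      · rwa [map_mul, hfy1, mul_one]
      · rwa [map_mul, hgx1, one_mul]
    · exact ⟨y, orderOf_eq_prime hfy hfy1, hgy⟩
  · exact ⟨x, hfx, orderOf_eq_prime hgx hgx1⟩

end OrderThree

namespace IntermediateField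

variable {K L : Type*} [Field K] [Field L] [Algebra K L] {F M : IntermediateField K L}

noncomputable def restrictNormalHomOfLE [Normal K L] [Normal K F] [Normal K M] (hFM : F ≤ M) :
    Gal(M/K) →* Gal(F/K) :=
  (AlgEquiv.restrictNormalHom M).liftOfSurjective (AlgEquiv.restrictNormalHom_surjective L)
    ⟨AlgEquiv.restrictNormalHom F, by
      rw [restrictNormalHom_ker, restrictNormalHom_ker]
      exact fixingSubgroup_le hFM⟩

theorem restrictNormalHomOfLE_surjective [Normal K L] [Normal K F] [Normal K M] (hFM : F ≤ M) :
    Function.Surjective (restrictNormalHomOfLE hFM) := fun τ => by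
  obtain ⟨σ, rfl⟩ := AlgEquiv.restrictNormalHom_surjective (K₁ := F) L τ
  exact ⟨AlgEquiv.restrictNormalHom M σ, MonoidHom.liftOfRightInverse_comp_apply _ _ _ _ σ⟩

theorem eq_of_le_of_three_dvd_finrank [IsGalois K L] [Normal K F] [IsGalois K M]
    [FiniteDimensional K M] (hFM : F ≤ M) (hM : IsS3OrC3 Gal(M/K)) (h3 : 3 ∣ finrank K F) :
    F = M := by
  have : FiniteDimensional K F :=
    .of_injective (inclusion hFM).toLinearMap (inclusion hFM).injective
  have : Algebra.IsSeparable K F := Algebra.isSeparable_tower_bot_of_isSeparable K F L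
  have : IsGalois K F := ⟨⟩
  refine eq_of_le_of_finrank_eq hFM ?_
  rw [← IsGalois.card_aut_eq_finrank] at h3
  rw [← IsGalois.card_aut_eq_finrank, ← IsGalois.card_aut_eq_finrank]
  exact hM.natCard_eq_of_surjective (restrictNormalHomOfLE_surjective hFM) h3

end IntermediateField

theorem stmt17_general {K L : Type*} [Field K] [Field L] [Algebra K L] [IsGalois K L]
    (M M' : IntermediateField K L) [IsGalois K ↥M] [IsGalois K ↥M']
    [FiniteDimensional K ↥M] [FiniteDimensional K ↥M']
    (hMM' : M ≠ M')
    (hGM : Nonempty ((↥M ≃ₐ[K] ↥M) ≃* Equiv.Perm (Fin 3)) ∨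
      Nonempty ((↥M ≃ₐ[K] ↥M) ≃* Multiplicative (ZMod 3)))
    (hGM' : Nonempty ((↥M' ≃ₐ[K] ↥M') ≃* Equiv.Perm (Fin 3)) ∨
      Nonempty ((↥M' ≃ₐ[K] ↥M') ≃* Multiplicative (ZMod 3))) :
    ¬ (3 ∣ Module.finrank K ↥(M ⊓ M')) ∧
      ∃ σ : L ≃ₐ[K] L,
        orderOf (AlgEquiv.restrictNormal σ ↥M) = 3 ∧
          orderOf (AlgEquiv.restrictNormal σ ↥M') = 3 := by
  refine ⟨fun h3 => hMM' ?_, ?_⟩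
  · exact (IntermediateField.eq_of_le_of_three_dvd_finrank inf_le_left hGM h3).symm.trans
      (IntermediateField.eq_of_le_of_three_dvd_finrank inf_le_right hGM' h3)
  · obtain ⟨a, ha⟩ := IsS3OrC3.exists_orderOf_eq_three hGM
    obtain ⟨a', ha'⟩ := IsS3OrC3.exists_orderOf_eq_three hGM'
    obtain ⟨x, rfl⟩ := AlgEquiv.restrictNormalHom_surjective (K₁ := M) L a
    obtain ⟨y, rfl⟩ := AlgEquiv.restrictNormalHom_surjective (K₁ := M') L a'
    exact exists_orderOf_map_eq_three (f := AlgEquiv.restrictNormalHom M)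
      (g := AlgEquiv.restrictNormalHom M') (IsS3OrC3.pow_six_eq_one hGM)
      (IsS3OrC3.pow_six_eq_one hGM') ha ha'

/-- Let `M/K` and `M'/K` be Galois extensions (inside a common
Galois extension `L/K`) with `Gal(M/K)` and `Gal(M'/K)` each isomorphic to `S₃` or
`ℤ/3ℤ`, `M ≠ M'`, and both degrees divisible by 3.  Then `3 ∤ [M ∩ M' : K]`, and
there exists `σ ∈ Gal(MM'/K)` (obtained here as the restriction of some
`σ ∈ Gal(L/K)`) whose restriction to `M` has order 3 and whose restriction to `M'`
has order 3. -/
theorem stmt17 {K L : Type*} [Field K] [Field L] [Algebra K L] [IsGalois K L]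
    (M M' : IntermediateField K L) [IsGalois K ↥M] [IsGalois K ↥M']
    [FiniteDimensional K ↥M] [FiniteDimensional K ↥M']
    (hMM' : M ≠ M')
    (hM3 : 3 ∣ Module.finrank K ↥M) (hM'3 : 3 ∣ Module.finrank K ↥M')
    (hGM : Nonempty ((↥M ≃ₐ[K] ↥M) ≃* Equiv.Perm (Fin 3)) ∨
      Nonempty ((↥M ≃ₐ[K] ↥M) ≃* Multiplicative (ZMod 3)))
    (hGM' : Nonempty ((↥M' ≃ₐ[K] ↥M') ≃* Equiv.Perm (Fin 3)) ∨
      Nonempty ((↥M' ≃ₐ[K] ↥M') ≃* Multiplicative (ZMod 3))) :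
    ¬ (3 ∣ Module.finrank K ↥(M ⊓ M')) ∧
      ∃ σ : L ≃ₐ[K] L,
        orderOf (AlgEquiv.restrictNormal σ ↥M) = 3 ∧
          orderOf (AlgEquiv.restrictNormal σ ↥M') = 3 :=
  stmt17_general M M' hMM' hGM hGM'
end
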